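/- In a discounted graph with uniform discount γ ∈ (0,1), the k-edge prefix of a discounted shortest path is optimal among walks with exactly k edges: if P = P_1 P_2 is a discounted shortest s → t walk with P_1 an s → w walk of exactly k edges, then c(P_1) equals the minimum discounted cost over all s → w walks with exactly k edges. -/
import Mathlib


/-- Discounted cost of a walk with a uniform discount factor `γ`. -/
def ucost {E : Type*} (c : E → ℝ) (γ : ℝ) : List E → ℝ
  | [] => 0
  | e :: P => c e + γ * ucost c γ P

/-- A list of edges forms a walk from `s` to `t`. -/
inductive IsWalk {V E : Type*} (tail head : E → V) : V → List E → V → Prop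
  | nil (v : V) : IsWalk tail head v [] v
  | cons (e : E) {P : List E} {w : V} :
      IsWalk tail head (head e) P w → IsWalk tail head (tail e) (e :: P) w

lemma IsWalk.append {V E : Type*} {tail head : E → V} {s w t : V} {A B : List E}
    (hA : IsWalk tail head s A w) (hB : IsWalk tail head w B t) :
    IsWalk tail head s (A ++ B) t := by
  induction hA with
  | nil => simpa
  | cons e _ ih => exact IsWalk.cons e (ih hB)

lemma ucost_append {E : Type*} (c : E → ℝ) (γ : ℝ) (A B : List E) :
    ucost c γ (A ++ B) = ucost c γ A + γ ^ A.length * ucost c γ B := by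
  induction A with
  | nil => simp [ucost]
  | cons e A ih => simp [ucost, ih, pow_succ]; ring

/-- Prefix optimality of discounted shortest paths: the `k`-edge prefix is optimal
among walks with exactly `k` edges and the same endpoints. -/
theorem stmt10 {V E : Type*} (tail head : E → V) (c : E → ℝ) (γ : ℝ)
    (hγ0 : 0 < γ) (hγ1 : γ < 1) (s w t : V) (k : ℕ) (P₁ P₂ : List E)
    (h1 : IsWalk tail head s P₁ w) (h2 : IsWalk tail head w P₂ t)
    (hk : P₁.length = k)
    (hopt : ∀ Q, IsWalk tail head s Q t → ucost c γ (P₁ ++ P₂) ≤ ucost c γ Q) :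
    ∀ Q, IsWalk tail head s Q w → Q.length = k → ucost c γ P₁ ≤ ucost c γ Q := by
  intro Q hQ hQk
  have := hopt (Q ++ P₂) (hQ.append h2)
  rw [ucost_append, ucost_append, hk, hQk] at this
  linarith
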